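/- Let I : ℝ → ℝ be continuous, and suppose there exist constants η > 2 and γ > 0 such that 0 < η·∫₀ᵘ I(ξ) dξ ≤ u·I(u) for all u with |u| ≥ γ. Then there exist constants a > 0 and b > 0 such that ∫₀ᵘ I(ξ) dξ ≥ a·|u|^η − b for all u ∈ ℝ. -/

import Mathlib

/-!
The condition `η F ≤ u F'` for the primitive `F u = ∫₀ᵘ I` says that `F u / u ^ η` is
nondecreasing for `u ≥ γ`, so `F u ≥ (F γ / γ ^ η) u ^ η` there, with `F γ > 0`. Reflecting
`I` gives the same bound for `u ≤ -γ`, and on the compact interval `[-γ, γ]` the continuous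
function `F` is bounded below, which the constant `b` absorbs.
-/

open Set

lemma monotoneOn_mul_rpow_neg_of_mul_le_mul_deriv {F f : ℝ → ℝ} {η γ : ℝ} (hγ : 0 < γ)
    (hF : ∀ u, γ ≤ u → HasDerivAt F (f u) u) (h : ∀ u, γ ≤ u → η * F u ≤ u * f u) :
    MonotoneOn (fun u => F u * u ^ (-η)) (Ici γ) := by
  have hderiv : ∀ u, γ ≤ u →
      HasDerivAt (fun u => F u * u ^ (-η)) (f u * u ^ (-η) + F u * (-η * u ^ (-η - 1))) u :=
    fun u hu => (hF u hu).mul (Real.hasDerivAt_rpow_const (Or.inl (hγ.trans_le hu).ne'))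
  refine monotoneOn_of_hasDerivWithinAt_nonneg (convex_Ici γ)
    (fun u hu => (hderiv u hu).continuousAt.continuousWithinAt)
    (fun u hu => (hderiv u (interior_subset hu : u ∈ Ici γ)).hasDerivWithinAt) ?_
  intro u hu
  rw [interior_Ici] at hu
  have hu0 : 0 < u := hγ.trans hu
  have hsplit : u ^ (-η) = u ^ (-η - 1) * u := by
    rw [← Real.rpow_add_one hu0.ne']; ring_nf
  calc (0 : ℝ) ≤ u ^ (-η - 1) * (u * f u - η * F u) :=
        mul_nonneg (Real.rpow_nonneg hu0.le _) (sub_nonneg.2 (h u hu.le))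
    _ = f u * u ^ (-η) + F u * (-η * u ^ (-η - 1)) := by rw [hsplit]; ring

lemma mul_rpow_le_of_mul_le_mul_deriv {F f : ℝ → ℝ} {η γ : ℝ} (hγ : 0 < γ)
    (hF : ∀ u, γ ≤ u → HasDerivAt F (f u) u) (h : ∀ u, γ ≤ u → η * F u ≤ u * f u)
    {u : ℝ} (hu : γ ≤ u) : F γ * γ ^ (-η) * u ^ η ≤ F u := by
  have hu0 : 0 < u := hγ.trans_le hu
  calc F γ * γ ^ (-η) * u ^ η
      ≤ F u * u ^ (-η) * u ^ η :=
        mul_le_mul_of_nonneg_right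
          (monotoneOn_mul_rpow_neg_of_mul_le_mul_deriv hγ hF h self_mem_Ici hu hu)
          (Real.rpow_nonneg hu0.le η)
    _ = F u := by rw [mul_assoc, ← Real.rpow_add hu0, neg_add_cancel, Real.rpow_zero, mul_one]

lemma exists_pos_mul_rpow_le_integral {I : ℝ → ℝ} (hI : Continuous I) {η γ : ℝ} (hγ : 0 < γ)
    (hpos : 0 < ∫ ξ in (0 : ℝ)..γ, I ξ)
    (hAR : ∀ u, γ ≤ u → η * (∫ ξ in (0 : ℝ)..u, I ξ) ≤ u * I u) :
    ∃ c, 0 < c ∧ ∀ u, γ ≤ u → c * u ^ η ≤ ∫ ξ in (0 : ℝ)..u, I ξ :=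
  ⟨_, mul_pos hpos (Real.rpow_pos_of_pos hγ _), fun _ hu =>
    mul_rpow_le_of_mul_le_mul_deriv hγ (fun u _ => hI.integral_hasStrictDerivAt 0 u |>.hasDerivAt)
      hAR hu⟩

lemma intervalIntegral_neg_comp_neg (I : ℝ → ℝ) (v : ℝ) :
    ∫ ξ in (0 : ℝ)..v, -I (-ξ) = ∫ ξ in (0 : ℝ)..-v, I ξ := by
  rw [intervalIntegral.integral_neg, intervalIntegral.integral_comp_neg, neg_zero,
    intervalIntegral.integral_symm, neg_neg]

lemma exists_pos_mul_abs_rpow_sub_le {F : ℝ → ℝ} (hF : Continuous F) {η γ c : ℝ} (hη : 0 ≤ η)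
    (hc : 0 ≤ c) (h : ∀ u, γ ≤ |u| → c * |u| ^ η ≤ F u) :
    ∃ b, 0 < b ∧ ∀ u, c * |u| ^ η - b ≤ F u := by
  obtain ⟨m, hm⟩ := (isCompact_Icc (a := -γ) (b := γ)).bddBelow_image hF.continuousOn
  refine ⟨c * |γ| ^ η + |m| + 1, by positivity, fun u => ?_⟩
  rcases le_or_gt γ |u| with hu | hu
  · have hcγ : 0 ≤ c * |γ| ^ η := by positivity
    linarith [h u hu, abs_nonneg m]
  · have hFu : m ≤ F u := hm ⟨u, abs_le.1 hu.le, rfl⟩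
    have hcu : c * |u| ^ η ≤ c * |γ| ^ η :=
      mul_le_mul_of_nonneg_left
        (Real.rpow_le_rpow (abs_nonneg u) (hu.le.trans (le_abs_self γ)) hη) hc
    linarith [neg_abs_le m]

/-- Under the Ambrosetti–Rabinowitz-type condition `0 < η·∫₀ᵘ I ≤ u·I(u)` for `|u| ≥ γ`,
the primitive of the impulse function `I` satisfies `∫₀ᵘ I ≥ a·|u|^η − b` on all of `ℝ`. -/
theorem statement4 (I : ℝ → ℝ) (hI : Continuous I)
    (η γ : ℝ) (hη : 2 < η) (hγ : 0 < γ)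
    (hAR : ∀ u : ℝ, γ ≤ |u| →
      0 < η * (∫ ξ in (0:ℝ)..u, I ξ) ∧
        η * (∫ ξ in (0:ℝ)..u, I ξ) ≤ u * I u) :
    ∃ a b : ℝ, 0 < a ∧ 0 < b ∧ ∀ u : ℝ,
      a * |u| ^ η - b ≤ ∫ ξ in (0:ℝ)..u, I ξ := by
  have hη0 : 0 < η := by linarith
  obtain ⟨c₁, hc₁, hright⟩ := exists_pos_mul_rpow_le_integral hI hγ
    (pos_of_mul_pos_right (hAR γ (le_abs_self γ)).1 hη0.le)
    (fun u hu => (hAR u (hu.trans (le_abs_self u))).2)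
  obtain ⟨c₂, hc₂, hleft⟩ := exists_pos_mul_rpow_le_integral (I := fun ξ => -I (-ξ)) (η := η)
    (by fun_prop) hγ
    (by
      rw [intervalIntegral_neg_comp_neg]
      exact pos_of_mul_pos_right (hAR (-γ) (by rw [abs_neg]; exact le_abs_self γ)).1 hη0.le)
    (fun v hv => by
      have hARv := (hAR (-v) (by rw [abs_neg]; exact hv.trans (le_abs_self v))).2
      rw [intervalIntegral_neg_comp_neg]
      linarith)
  have hbound : ∀ u, γ ≤ |u| → min c₁ c₂ * |u| ^ η ≤ ∫ ξ in (0 : ℝ)..u, I ξ := by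
    intro u hu
    rcases le_or_gt 0 u with hu0 | hu0
    · rw [abs_of_nonneg hu0] at hu ⊢
      exact (mul_le_mul_of_nonneg_right (min_le_left _ _) (by positivity)).trans (hright u hu)
    · rw [abs_of_neg hu0] at hu ⊢
      have hleftu := hleft (-u) hu
      rw [intervalIntegral_neg_comp_neg, neg_neg] at hleftu
      exact (mul_le_mul_of_nonneg_right (min_le_right _ _)
        (Real.rpow_nonneg (by linarith) _)).trans hleftu
  obtain ⟨b, hb, hlow⟩ := exists_pos_mul_abs_rpow_sub_le
    (intervalIntegral.continuous_primitive (fun _ _ => hI.intervalIntegrable _ _) 0)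
    hη0.le (le_min hc₁.le hc₂.le) hbound
  exact ⟨_, b, lt_min hc₁ hc₂, hb, hlow⟩
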